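/- arXiv:math/0309286 — 2 statements merged into one kernel-verified Lean document; each statement's English description precedes it below -/
import Mathlib

section
/- Let k : (0,∞) → [0,∞) be nonincreasing, let σ be Lebesgue measure on ℝ^n, and set K(Q) = k(r_Q) for Q ∈ 𝒟. Then there exists a constant C > 0, independent of Q, such that for every Q ∈ 𝒟 and every x ∈ Q, (1/C) · r_Q^{−n} ∫_0^{r_Q} k(t) t^{n−1} dt ≤ K̄(Q)(x) ≤ C · r_Q^{−n} ∫_0^{r_Q} k(t) t^{n−1} dt. -/
open MeasureTheory ENNReal Set
open scoped Classical ENNReal NNReal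

noncomputable section

/-- We model `ℝ^n` as `EuclideanSpace ℝ (Fin n)`. -/
abbrev Euc (n : ℕ) := EuclideanSpace ℝ (Fin n)

/-- Indices `(k, m)` of dyadic cubes in `ℝ^n`. -/
abbrev DIdx (n : ℕ) := ℤ × (Fin n → ℤ)

/-- The dyadic cube with index `q = (k, m)`, namely `2^{-k}(m + [0,1)^n)`. -/
def dCube (n : ℕ) (q : DIdx n) : Set (Euc n) :=
  {x | ∀ i, (q.2 i : ℝ) ≤ (2:ℝ) ^ q.1 * x i ∧ (2:ℝ) ^ q.1 * x i < (q.2 i : ℝ) + 1}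

/-- The side length of the dyadic cube of index `q = (k, m)` is `2^{-k}`. -/
def sideLen (n : ℕ) (q : DIdx n) : ℝ := (2:ℝ) ^ (-q.1)

/-- Characteristic function of a dyadic cube, with values in `ℝ≥0∞`. -/
def ch (n : ℕ) (q : DIdx n) (x : Euc n) : ℝ≥0∞ := (dCube n q).indicator 1 x

/-- `K̄(Q)(x) = σ(Q)⁻¹ ∑_{Q' ⊆ Q} K(Q') σ(Q') χ_{Q'}(x)`.
(Since `σ(Q') ≤ σ(Q)` for `Q' ⊆ Q`, this is automatically `0` when `σ(Q) = 0`,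
by the convention `∞ · 0 = 0` in `ℝ≥0∞`.) -/
def Kbar (n : ℕ) (σ : Measure (Euc n)) (K : DIdx n → ℝ≥0∞) (q : DIdx n) (x : Euc n) : ℝ≥0∞ :=
  (σ (dCube n q))⁻¹ *
    ∑' q' : DIdx n, if dCube n q' ⊆ dCube n q then K q' * σ (dCube n q') * ch n q' x else 0

/-!
For `x ∈ Q` the dyadic subcubes of `Q` containing `x` form a chain with exactly one cube of each
side length `r_Q 2^{-d}`, `d ≥ 0`, so `K̄(Q)(x) = r_Q^{-n} ∑_d k(r_Q 2^{-d}) (r_Q 2^{-d})^n`.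
Splitting `(0, r_Q)` into the shells `(r_Q 2^{-d-1}, r_Q 2^{-d}]` and using that `k` is
nonincreasing and `t^{n-1}` nondecreasing, the integral of `k(t) t^{n-1}` over each shell lies
between the two neighbouring terms of this sum, up to a factor `2^n`; so `C = 2^n` works.
-/

lemma iUnion_Ioc_div_two_pow {s : ℝ} (hs : 0 < s) :
    ⋃ i : ℕ, Ioc (s / 2 ^ (i + 1)) (s / 2 ^ i) = Ioc 0 s := by
  ext t
  simp only [mem_iUnion, mem_Ioc]
  constructor
  · rintro ⟨i, hti, hts⟩
    exact ⟨(by positivity : 0 < s / 2 ^ (i + 1)).trans hti,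
      hts.trans (div_le_self hs.le (one_le_pow₀ one_le_two))⟩
  · rintro ⟨ht, hts⟩
    obtain ⟨i, hi, hi'⟩ := exists_nat_pow_near ((one_le_div ht).2 hts) one_lt_two
    refine ⟨i, ?_, ?_⟩
    · rwa [div_lt_iff₀ (by positivity), mul_comm, ← div_lt_iff₀ ht]
    · rwa [le_div_iff₀ (by positivity), mul_comm, ← le_div_iff₀ ht]

lemma lintegral_Ioo_eq_tsum_lintegral_Ioc {s : ℝ} (hs : 0 < s) (f : ℝ → ℝ≥0∞) :
    ∫⁻ t in Ioo 0 s, f t = ∑' i : ℕ, ∫⁻ t in Ioc (s / 2 ^ (i + 1)) (s / 2 ^ i), f t := by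
  have hanti : Antitone fun i : ℕ => s / 2 ^ i := fun i j hij =>
    div_le_div_of_nonneg_left hs.le (by positivity) (pow_le_pow_right₀ one_le_two hij)
  rw [setLIntegral_congr Ioo_ae_eq_Ioc, ← iUnion_Ioc_div_two_pow hs]
  exact lintegral_iUnion (fun i => measurableSet_Ioc) hanti.pairwise_disjoint_on_Ioc_succ f

lemma ofReal_rpow_natCast_sub_one_mul_self {r : ℝ} (hr : 0 < r) (n : ℕ) :
    ENNReal.ofReal (r ^ ((n : ℝ) - 1)) * ENNReal.ofReal r = ENNReal.ofReal r ^ n := by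
  rw [← ENNReal.ofReal_mul (by positivity), Real.rpow_sub_one hr.ne', div_mul_cancel₀ _ hr.ne',
    Real.rpow_natCast, ENNReal.ofReal_pow hr.le]

section DyadicComparison

variable {φ : ℝ → ℝ≥0∞} {n : ℕ}

lemma volume_Ioc_self_two_mul {r : ℝ} : volume (Ioc r (2 * r)) = ENNReal.ofReal r := by
  rw [Real.volume_Ioc]; ring_nf

lemma ofReal_two_mul_pow (r : ℝ) :
    ENNReal.ofReal (2 * r) ^ n = 2 ^ n * ENNReal.ofReal r ^ n := by
  rw [ENNReal.ofReal_mul zero_le_two, ENNReal.ofReal_ofNat, mul_pow]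

lemma mul_ofReal_pow_le_lintegral_Ioc (hφ : AntitoneOn φ (Ioi 0)) (hn : 0 < n) {r : ℝ}
    (hr : 0 < r) :
    φ (2 * r) * ENNReal.ofReal (2 * r) ^ n ≤
      2 ^ n * ∫⁻ t in Ioc r (2 * r), φ t * ENNReal.ofReal (t ^ ((n : ℝ) - 1)) := by
  have hexp : (0 : ℝ) ≤ n - 1 := sub_nonneg.2 (Nat.one_le_cast.2 hn)
  have hpoint : ∀ t ∈ Ioc r (2 * r),
      φ (2 * r) * ENNReal.ofReal (r ^ ((n : ℝ) - 1)) ≤ φ t * ENNReal.ofReal (t ^ ((n : ℝ) - 1)) :=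
    fun t ⟨hrt, ht⟩ => mul_le_mul' (hφ (hr.trans hrt) (mem_Ioi.2 (by positivity)) ht)
      (ENNReal.ofReal_le_ofReal (Real.rpow_le_rpow hr.le hrt.le hexp))
  calc φ (2 * r) * ENNReal.ofReal (2 * r) ^ n
      = 2 ^ n * ∫⁻ _ in Ioc r (2 * r), φ (2 * r) * ENNReal.ofReal (r ^ ((n : ℝ) - 1)) := by
        rw [setLIntegral_const, volume_Ioc_self_two_mul, mul_assoc,
          ofReal_rpow_natCast_sub_one_mul_self hr, ofReal_two_mul_pow r]
        ring
    _ ≤ _ := mul_le_mul_right (setLIntegral_mono' measurableSet_Ioc hpoint) _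

lemma lintegral_Ioc_le_mul_ofReal_pow (hφ : AntitoneOn φ (Ioi 0)) (hn : 0 < n) {r : ℝ}
    (hr : 0 < r) :
    ∫⁻ t in Ioc r (2 * r), φ t * ENNReal.ofReal (t ^ ((n : ℝ) - 1)) ≤
      2 ^ n * (φ r * ENNReal.ofReal r ^ n) := by
  have hexp : (0 : ℝ) ≤ n - 1 := sub_nonneg.2 (Nat.one_le_cast.2 hn)
  have h2r : 0 < 2 * r := by positivity
  have hpoint : ∀ t ∈ Ioc r (2 * r),
      φ t * ENNReal.ofReal (t ^ ((n : ℝ) - 1)) ≤ φ r * ENNReal.ofReal ((2 * r) ^ ((n : ℝ) - 1)) :=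
    fun t ⟨hrt, ht⟩ => mul_le_mul' (hφ hr (hr.trans hrt) hrt.le)
      (ENNReal.ofReal_le_ofReal (Real.rpow_le_rpow (hr.trans hrt).le ht hexp))
  calc ∫⁻ t in Ioc r (2 * r), φ t * ENNReal.ofReal (t ^ ((n : ℝ) - 1))
      ≤ ∫⁻ _ in Ioc r (2 * r), φ r * ENNReal.ofReal ((2 * r) ^ ((n : ℝ) - 1)) :=
        setLIntegral_mono' measurableSet_Ioc hpoint
    _ ≤ φ r * (ENNReal.ofReal ((2 * r) ^ ((n : ℝ) - 1)) * ENNReal.ofReal (2 * r)) := by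
        rw [setLIntegral_const, volume_Ioc_self_two_mul, mul_assoc]
        gcongr
        linarith
    _ = 2 ^ n * (φ r * ENNReal.ofReal r ^ n) := by
        rw [ofReal_rpow_natCast_sub_one_mul_self h2r, ofReal_two_mul_pow r]
        ring

lemma two_mul_div_two_pow_succ (s : ℝ) (i : ℕ) : 2 * (s / 2 ^ (i + 1)) = s / 2 ^ i := by
  rw [pow_succ]; field_simp

lemma tsum_le_two_pow_mul_lintegral (hφ : AntitoneOn φ (Ioi 0)) (hn : 0 < n) {s : ℝ}
    (hs : 0 < s) :
    ∑' i : ℕ, φ (s / 2 ^ i) * ENNReal.ofReal (s / 2 ^ i) ^ n ≤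
      2 ^ n * ∫⁻ t in Ioo 0 s, φ t * ENNReal.ofReal (t ^ ((n : ℝ) - 1)) := by
  rw [lintegral_Ioo_eq_tsum_lintegral_Ioc hs, ← ENNReal.tsum_mul_left]
  refine ENNReal.tsum_le_tsum fun i => ?_
  have := mul_ofReal_pow_le_lintegral_Ioc hφ hn (by positivity : 0 < s / 2 ^ (i + 1))
  rwa [two_mul_div_two_pow_succ] at this

lemma lintegral_le_two_pow_mul_tsum (hφ : AntitoneOn φ (Ioi 0)) (hn : 0 < n) {s : ℝ}
    (hs : 0 < s) :
    ∫⁻ t in Ioo 0 s, φ t * ENNReal.ofReal (t ^ ((n : ℝ) - 1)) ≤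
      2 ^ n * ∑' i : ℕ, φ (s / 2 ^ i) * ENNReal.ofReal (s / 2 ^ i) ^ n := by
  set F : ℕ → ℝ≥0∞ := fun i => φ (s / 2 ^ i) * ENNReal.ofReal (s / 2 ^ i) ^ n
  calc ∫⁻ t in Ioo 0 s, φ t * ENNReal.ofReal (t ^ ((n : ℝ) - 1))
      ≤ ∑' i : ℕ, 2 ^ n * F (i + 1) := by
        rw [lintegral_Ioo_eq_tsum_lintegral_Ioc hs]
        refine ENNReal.tsum_le_tsum fun i => ?_
        have := lintegral_Ioc_le_mul_ofReal_pow hφ hn (by positivity : 0 < s / 2 ^ (i + 1))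
        rwa [two_mul_div_two_pow_succ] at this
    _ ≤ 2 ^ n * ∑' i : ℕ, F i := by
        rw [ENNReal.tsum_mul_left]
        exact mul_le_mul_right (ENNReal.tsum_comp_le_tsum_of_injective (add_left_injective 1) F) _

end DyadicComparison

def cubeAt (n : ℕ) (j : ℤ) (x : Euc n) : DIdx n := (j, fun i => ⌊(2:ℝ) ^ j * x i⌋)

section DyadicCubes

variable {n : ℕ}

lemma mem_dCube_iff {q : DIdx n} {x : Euc n} :
    x ∈ dCube n q ↔ ∀ i, ⌊(2:ℝ) ^ q.1 * x i⌋ = q.2 i := by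
  simp only [dCube, mem_ofPred_eq, Int.floor_eq_iff]

lemma mem_dCube_cubeAt (j : ℤ) (x : Euc n) : x ∈ dCube n (cubeAt n j x) :=
  mem_dCube_iff.2 fun _ => rfl

lemma eq_cubeAt_of_mem {q : DIdx n} {x : Euc n} (hx : x ∈ dCube n q) : q = cubeAt n q.1 x :=
  Prod.ext rfl (funext fun i => (mem_dCube_iff.1 hx i).symm)

lemma floor_two_zpow_mul_eq_floor_div (a : ℤ) (d : ℕ) (y : ℝ) :
    ⌊(2:ℝ) ^ a * y⌋ = ⌊(2:ℝ) ^ (a + d) * y⌋ / 2 ^ d := by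
  have h : (2:ℝ) ^ a * y = (2:ℝ) ^ (a + d) * y / ((2 ^ d : ℕ) : ℝ) := by
    rw [zpow_add₀ two_ne_zero, zpow_natCast]; push_cast; field_simp
  rw [h, Int.floor_div_natCast]
  push_cast
  rfl

lemma dCube_cubeAt_subset {q : DIdx n} {x : Euc n} (hx : x ∈ dCube n q) (d : ℕ) :
    dCube n (cubeAt n (q.1 + d) x) ⊆ dCube n q := by
  intro y hy
  rw [mem_dCube_iff] at hx hy ⊢
  intro i
  have hyi : ⌊(2:ℝ) ^ (q.1 + d) * y i⌋ = ⌊(2:ℝ) ^ (q.1 + d) * x i⌋ := hy i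
  rw [← hx i, floor_two_zpow_mul_eq_floor_div q.1 d, floor_two_zpow_mul_eq_floor_div q.1 d (x i),
    hyi]

lemma dCube_eq_preimage (q : DIdx n) :
    dCube n q = (MeasurableEquiv.toLp 2 (Fin n → ℝ)).symm ⁻¹'
      univ.pi fun i => Ico ((q.2 i : ℝ) / 2 ^ q.1) ((q.2 i + 1) / 2 ^ q.1) := by
  ext x
  simp only [dCube, mem_ofPred_eq, mem_preimage, mem_pi, mem_univ, forall_true_left, mem_Ico]
  refine forall_congr' fun i => ?_
  have hpos : (0:ℝ) < 2 ^ q.1 := zpow_pos two_pos _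
  rw [div_le_iff₀ hpos, lt_div_iff₀ hpos, mul_comm ((2:ℝ) ^ q.1) (x i)]
  rfl

lemma volume_dCube (q : DIdx n) : volume (dCube n q) = ENNReal.ofReal (sideLen n q) ^ n := by
  have hIco : ∀ i, volume (Ico ((q.2 i : ℝ) / 2 ^ q.1) ((q.2 i + 1) / 2 ^ q.1)) =
      ENNReal.ofReal (sideLen n q) := fun i => by
    rw [Real.volume_Ico, sideLen, div_sub_div_same, add_sub_cancel_left, one_div, zpow_neg]
  rw [dCube_eq_preimage, (EuclideanSpace.volume_preserving_symm_measurableEquiv_toLp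
    (Fin n)).measure_preimage (MeasurableSet.univ_pi fun _ => measurableSet_Ico).nullMeasurableSet,
    volume_pi_pi]
  simp only [hIco, Finset.prod_const, Finset.card_univ, Fintype.card_fin]

lemma le_of_dCube_subset (hn : 0 < n) {q q' : DIdx n} (h : dCube n q' ⊆ dCube n q) :
    q.1 ≤ q'.1 := by
  have hvol := measure_mono (μ := volume) h
  have hpos : ∀ p : DIdx n, 0 < sideLen n p := fun p => zpow_pos two_pos _
  rw [volume_dCube, volume_dCube, ← ENNReal.ofReal_pow (hpos _).le,
    ← ENNReal.ofReal_pow (hpos _).le, ENNReal.ofReal_le_ofReal_iff (pow_pos (hpos _) n).le,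
    pow_le_pow_iff_left₀ (hpos _).le (hpos _).le hn.ne', sideLen, sideLen,
    zpow_le_zpow_iff_right₀ (one_lt_two : (1:ℝ) < 2)] at hvol
  omega

lemma sideLen_cubeAt (q : DIdx n) (x : Euc n) (d : ℕ) :
    sideLen n (cubeAt n (q.1 + d) x) = sideLen n q / 2 ^ d := by
  rw [sideLen, sideLen, cubeAt, neg_add, zpow_add₀ two_ne_zero, zpow_neg (2:ℝ) d,
    zpow_natCast, div_eq_mul_inv]

lemma tsum_ite_subset_mul_ch (hn : 0 < n) {q : DIdx n} {x : Euc n} (hx : x ∈ dCube n q)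
    (g : DIdx n → ℝ≥0∞) :
    ∑' q' : DIdx n, (if dCube n q' ⊆ dCube n q then g q' * ch n q' x else 0) =
      ∑' d : ℕ, g (cubeAt n (q.1 + d) x) := by
  have hinj : Function.Injective fun d : ℕ => cubeAt n (q.1 + d) x := fun d d' h => by
    simpa [cubeAt] using congrArg Prod.fst h
  have hsupp : Function.support (fun q' : DIdx n =>
      if dCube n q' ⊆ dCube n q then g q' * ch n q' x else 0) ⊆
      range fun d : ℕ => cubeAt n (q.1 + d) x := by
    intro q' hq'
    by_cases hsub : dCube n q' ⊆ dCube n q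
    · have hxq' : x ∈ dCube n q' := by
        by_contra hx'
        simp [hsub, ch, hx'] at hq'
      refine ⟨(q'.1 - q.1).toNat, ?_⟩
      change cubeAt n (q.1 + ((q'.1 - q.1).toNat : ℤ)) x = q'
      rw [Int.toNat_of_nonneg (sub_nonneg.2 (le_of_dCube_subset hn hsub)), add_sub_cancel,
        ← eq_cubeAt_of_mem hxq']
    · simp [hsub] at hq'
  rw [← hinj.tsum_eq hsupp]
  refine tsum_congr fun d => ?_
  simp [dCube_cubeAt_subset hx d, ch, mem_dCube_cubeAt]

lemma Kbar_eq_tsum (hn : 0 < n) (σ : Measure (Euc n)) (K : DIdx n → ℝ≥0∞) {q : DIdx n}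
    {x : Euc n} (hx : x ∈ dCube n q) :
    Kbar n σ K q x = (σ (dCube n q))⁻¹ *
      ∑' d : ℕ, K (cubeAt n (q.1 + d) x) * σ (dCube n (cubeAt n (q.1 + d) x)) :=
  congrArg _ (tsum_ite_subset_mul_ch hn hx fun q' => K q' * σ (dCube n q'))

end DyadicCubes

theorem stmt4_general (n : ℕ) (hn : 0 < n) (k : ℝ → ℝ)
    (hmono : AntitoneOn k (Ioi (0:ℝ))) :
    ∃ C : ℝ, 0 < C ∧
      ∀ Q : DIdx n, ∀ x ∈ dCube n Q,
        ENNReal.ofReal (C⁻¹ * (sideLen n Q) ^ (-(n:ℝ))) *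
            (∫⁻ t in Ioo (0:ℝ) (sideLen n Q), ENNReal.ofReal (k t * t ^ ((n:ℝ) - 1))) ≤
          Kbar n volume (fun q => ENNReal.ofReal (k (sideLen n q))) Q x ∧
        Kbar n volume (fun q => ENNReal.ofReal (k (sideLen n q))) Q x ≤
          ENNReal.ofReal (C * (sideLen n Q) ^ (-(n:ℝ))) *
            ∫⁻ t in Ioo (0:ℝ) (sideLen n Q), ENNReal.ofReal (k t * t ^ ((n:ℝ) - 1)) := by
  refine ⟨2 ^ n, by positivity, fun Q x hx => ?_⟩
  set s := sideLen n Q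
  have hs : 0 < s := zpow_pos two_pos _
  have hφ : AntitoneOn (fun t => ENNReal.ofReal (k t)) (Ioi 0) :=
    fun a ha b hb hab => ENNReal.ofReal_le_ofReal (hmono ha hb hab)
  have hintegral : ∫⁻ t in Ioo 0 s, ENNReal.ofReal (k t * t ^ ((n:ℝ) - 1)) =
      ∫⁻ t in Ioo 0 s, ENNReal.ofReal (k t) * ENNReal.ofReal (t ^ ((n:ℝ) - 1)) :=
    setLIntegral_congr_fun measurableSet_Ioo fun t ht =>
      ENNReal.ofReal_mul' (Real.rpow_nonneg ht.1.le _)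
  have hKbar : Kbar n volume (fun q => ENNReal.ofReal (k (sideLen n q))) Q x =
      ENNReal.ofReal (s ^ (-(n:ℝ))) *
        ∑' d : ℕ, ENNReal.ofReal (k (s / 2 ^ d)) * ENNReal.ofReal (s / 2 ^ d) ^ n := by
    rw [Kbar_eq_tsum hn _ _ hx, volume_dCube, Real.rpow_neg hs.le, Real.rpow_natCast,
      ENNReal.ofReal_inv_of_pos (by positivity), ENNReal.ofReal_pow hs.le]
    simp only [volume_dCube, sideLen_cubeAt, s]
  have hC : ENNReal.ofReal ((2:ℝ) ^ n) = 2 ^ n := by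
    rw [ENNReal.ofReal_pow zero_le_two, ENNReal.ofReal_ofNat]
  rw [hintegral, hKbar, ENNReal.ofReal_mul (by positivity), ENNReal.ofReal_mul (by positivity),
    ENNReal.ofReal_inv_of_pos (by positivity), hC]
  constructor
  · rw [mul_right_comm, mul_comm]
    exact mul_le_mul_right ((ENNReal.inv_mul_le_iff (by simp) (by simp)).2
      (lintegral_le_two_pow_mul_tsum hφ hn hs)) _
  · rw [mul_assoc, mul_left_comm]
    exact mul_le_mul_right (tsum_le_two_pow_mul_lintegral hφ hn hs) _

/-- If `k : (0,∞) → [0,∞)` is nonincreasing, `σ` is Lebesgue measure on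
`ℝ^n`, and `K(Q) = k(r_Q)`, then there is a constant `C > 0`, independent of `Q`, such that
for every dyadic cube `Q` and every `x ∈ Q`,
`(1/C) r_Q^{-n} ∫_0^{r_Q} k(t) t^{n-1} dt ≤ K̄(Q)(x) ≤ C r_Q^{-n} ∫_0^{r_Q} k(t) t^{n-1} dt`. -/
theorem stmt4 (n : ℕ) (hn : 0 < n) (k : ℝ → ℝ)
    (hk0 : ∀ r ∈ Ioi (0:ℝ), 0 ≤ k r) (hmono : AntitoneOn k (Ioi (0:ℝ))) :
    ∃ C : ℝ, 0 < C ∧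
      ∀ Q : DIdx n, ∀ x ∈ dCube n Q,
        ENNReal.ofReal (C⁻¹ * (sideLen n Q) ^ (-(n:ℝ))) *
            (∫⁻ t in Ioo (0:ℝ) (sideLen n Q), ENNReal.ofReal (k t * t ^ ((n:ℝ) - 1))) ≤
          Kbar n volume (fun q => ENNReal.ofReal (k (sideLen n q))) Q x ∧
        Kbar n volume (fun q => ENNReal.ofReal (k (sideLen n q))) Q x ≤
          ENNReal.ofReal (C * (sideLen n Q) ^ (-(n:ℝ))) *
            ∫⁻ t in Ioo (0:ℝ) (sideLen n Q), ENNReal.ofReal (k t * t ^ ((n:ℝ) - 1)) :=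
  stmt4_general n hn k hmono
end
end

section
/- Let 0 < α < n and K(Q) = r_Q^{α−n} for Q ∈ 𝒟, and let σ be a locally finite positive Borel measure on ℝ^n. Suppose there exists C > 0 such that for every Q ∈ 𝒟 and every x ∈ Q, K̄(Q)(x) ≤ C r_Q^{α−n}. Then σ satisfies the dyadic reverse doubling condition DRD_γ with γ = n − α + log₂(1/C + 1) > n − α: there exists C'' > 0 such that σ(2^j Q) ≥ C'' 2^{jγ} σ(Q) for all j ≥ 0 and Q ∈ 𝒟, where 2^j Q is the unique dyadic cube containing Q with side length 2^j r_Q. -/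
open MeasureTheory ENNReal Set
open scoped Classical ENNReal NNReal

noncomputable section

/-!
Fix `x ∈ Q` and let `Q = Q₀ ⊆ Q₁ ⊆ ⋯` be its dyadic ancestors, `c_i = r_{Q_i}^{α-n}` and
`a_i = c_i σ(Q_i)`. The sum defining `K̄(Q_m)(x)` contains the terms of `Q₀, …, Q_m`, so the
hypothesis gives `T_m := a₀ + ⋯ + a_m ≤ C a_m`. Hence `a_{m+1} ≥ T_{m+1}/C ≥ T_m/C`, that is
`T_{m+1} ≥ (1 + 1/C) T_m`, and so `C a_j ≥ T_j ≥ (1 + 1/C)^j a₀`. Since `c₀ / c_j = 2^{j(n-α)}`,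
this is the reverse doubling inequality with constant `1/C`.
-/

def dIdxAt (n : ℕ) (k : ℤ) (x : Euc n) : DIdx n := (k, fun i => ⌊(2:ℝ) ^ k * x i⌋)

lemma mem_dCube_iff_floor {n : ℕ} {q : DIdx n} {x : Euc n} :
    x ∈ dCube n q ↔ ∀ i, ⌊(2:ℝ) ^ q.1 * x i⌋ = q.2 i :=
  forall_congr' fun _ => Int.floor_eq_iff.symm

lemma mem_dCube_dIdxAt (n : ℕ) (k : ℤ) (x : Euc n) : x ∈ dCube n (dIdxAt n k x) :=
  mem_dCube_iff_floor.2 fun _ => rfl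

lemma eq_dIdxAt_of_mem {n : ℕ} {q : DIdx n} {x : Euc n} (h : x ∈ dCube n q) :
    q = dIdxAt n q.1 x :=
  Prod.ext rfl (funext fun i => (mem_dCube_iff_floor.1 h i).symm)

lemma dCube_dIdxAt_subset {n : ℕ} {l l' : ℤ} (h : l ≤ l') (x : Euc n) :
    dCube n (dIdxAt n l' x) ⊆ dCube n (dIdxAt n l x) := by
  obtain ⟨d, rfl⟩ := Int.le.dest h
  have hscale (t : ℝ) : (2:ℝ) ^ l * t = (2:ℝ) ^ (l + d) * t / ((2 ^ d : ℕ) : ℝ) := by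
    rw [zpow_add₀ two_ne_zero, zpow_natCast]
    push_cast
    field_simp
  intro y hy
  refine mem_dCube_iff_floor.2 fun i => ?_
  have hyi : ⌊(2:ℝ) ^ (l + d) * y i⌋ = ⌊(2:ℝ) ^ (l + d) * x i⌋ := mem_dCube_iff_floor.1 hy i
  change ⌊(2:ℝ) ^ l * y i⌋ = ⌊(2:ℝ) ^ l * x i⌋
  rw [hscale, hscale (x i), Int.floor_div_natCast, Int.floor_div_natCast, hyi]

lemma dCube_nonempty (n : ℕ) (q : DIdx n) : (dCube n q).Nonempty := by
  refine ⟨WithLp.toLp 2 fun i => (q.2 i : ℝ) / (2:ℝ) ^ q.1, fun i => ?_⟩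
  have hmul : (2:ℝ) ^ q.1 * ((q.2 i : ℝ) / (2:ℝ) ^ q.1) = q.2 i := by field_simp
  simp only [hmul]
  exact ⟨le_rfl, lt_add_one _⟩

lemma sideLen_pos (n : ℕ) (q : DIdx n) : 0 < sideLen n q := zpow_pos two_pos _

lemma sideLen_rpow (n : ℕ) (q : DIdx n) (w : ℝ) : sideLen n q ^ w = (2:ℝ) ^ (-(q.1 : ℝ) * w) := by
  rw [sideLen, ← Real.rpow_intCast, ← Real.rpow_mul zero_le_two]
  push_cast
  rfl

lemma sum_le_measure_mul_Kbar {n : ℕ} (σ : Measure (Euc n)) (K : DIdx n → ℝ≥0∞) {q : DIdx n}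
    {x : Euc n} (hσ : σ (dCube n q) ≠ ∞) (s : Finset (DIdx n))
    (hs : ∀ q' ∈ s, dCube n q' ⊆ dCube n q ∧ x ∈ dCube n q') :
    ∑ q' ∈ s, K q' * σ (dCube n q') ≤ σ (dCube n q) * Kbar n σ K q x := by
  by_cases h0 : σ (dCube n q) = 0
  · have hnull : ∀ q' ∈ s, K q' * σ (dCube n q') = 0 := fun q' hq' => by
      rw [measure_mono_null (hs q' hq').1 h0, mul_zero]
    rw [Finset.sum_eq_zero hnull]
    exact zero_le
  rw [Kbar, ← mul_assoc, ENNReal.mul_inv_cancel h0 hσ, one_mul]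
  refine le_trans (le_of_eq (Finset.sum_congr rfl fun q' hq' => ?_)) (ENNReal.sum_le_tsum s)
  rw [if_pos (hs q' hq').1, ch, indicator_of_mem (hs q' hq').2, Pi.one_apply, mul_one]

lemma sum_chain_le_measure_mul_Kbar {n : ℕ} (σ : Measure (Euc n)) (K : DIdx n → ℝ≥0∞)
    (x : Euc n) (k : ℤ) {m : ℕ} (hσ : σ (dCube n (dIdxAt n (k - m) x)) ≠ ∞) :
    ∑ i ∈ Finset.range (m + 1), K (dIdxAt n (k - i) x) * σ (dCube n (dIdxAt n (k - i) x)) ≤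
      σ (dCube n (dIdxAt n (k - m) x)) * Kbar n σ K (dIdxAt n (k - m) x) x := by
  have hinj : Set.InjOn (fun i : ℕ => dIdxAt n (k - i) x) (Finset.range (m + 1)) :=
    fun a _ b _ hab => by
      have hlev : k - a = k - b := congrArg Prod.fst hab
      omega
  rw [← Finset.sum_image (g := fun i : ℕ => dIdxAt n (k - i) x)
    (f := fun q => K q * σ (dCube n q)) hinj]
  refine sum_le_measure_mul_Kbar σ K hσ _ fun q hq => ?_
  obtain ⟨i, hi, rfl⟩ := Finset.mem_image.1 hq
  exact ⟨dCube_dIdxAt_subset (by simp at hi; omega) x, mem_dCube_dIdxAt n _ x⟩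

lemma pow_mul_le_mul_of_sum_range_le {a : ℕ → ℝ≥0∞} {c : ℝ≥0∞} {j : ℕ}
    (h : ∀ m ≤ j, ∑ i ∈ Finset.range (m + 1), a i ≤ c * a m) :
    (1 + c⁻¹) ^ j * a 0 ≤ c * a j := by
  suffices ∀ m ≤ j, (1 + c⁻¹) ^ m * a 0 ≤ ∑ i ∈ Finset.range (m + 1), a i from
    (this j le_rfl).trans (h j le_rfl)
  intro m hm
  induction m with
  | zero => simp
  | succ m ih =>
    set T := ∑ i ∈ Finset.range (m + 1), a i
    have hT : ∑ i ∈ Finset.range (m + 2), a i = T + a (m + 1) := Finset.sum_range_succ _ _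
    have hnext : c⁻¹ * T ≤ a (m + 1) := calc
      c⁻¹ * T ≤ c⁻¹ * (c * a (m + 1)) := by
        gcongr
        exact (hT ▸ le_self_add).trans (h _ hm)
      _ ≤ a (m + 1) := by
        rw [← mul_assoc]
        exact mul_le_of_le_one_left' (ENNReal.inv_mul_le_one c)
    calc (1 + c⁻¹) ^ (m + 1) * a 0 = (1 + c⁻¹) * ((1 + c⁻¹) ^ m * a 0) := by ring
      _ ≤ (1 + c⁻¹) * T := by gcongr; exact ih (by omega)
      _ = T + c⁻¹ * T := by ring
      _ ≤ T + a (m + 1) := by gcongr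
      _ = _ := hT.symm

lemma sum_chain_le_of_Kbar_le {n : ℕ} {σ : Measure (Euc n)} {C w : ℝ} (hC : 0 ≤ C)
    (hKbar : ∀ Q : DIdx n, ∀ x ∈ dCube n Q,
      Kbar n σ (fun q => ENNReal.ofReal (sideLen n q ^ w)) Q x ≤
        ENNReal.ofReal (C * sideLen n Q ^ w))
    (x : Euc n) (k : ℤ) {m : ℕ} (hσ : σ (dCube n (dIdxAt n (k - m) x)) ≠ ∞) :
    ∑ i ∈ Finset.range (m + 1),
        ENNReal.ofReal (sideLen n (dIdxAt n (k - i) x) ^ w) * σ (dCube n (dIdxAt n (k - i) x)) ≤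
      ENNReal.ofReal C *
        (ENNReal.ofReal (sideLen n (dIdxAt n (k - m) x) ^ w) * σ (dCube n (dIdxAt n (k - m) x))) :=
  calc _ ≤ σ (dCube n (dIdxAt n (k - m) x)) *
        Kbar n σ (fun q => ENNReal.ofReal (sideLen n q ^ w)) (dIdxAt n (k - m) x) x :=
        sum_chain_le_measure_mul_Kbar σ _ x k hσ
    _ ≤ σ (dCube n (dIdxAt n (k - m) x)) *
        ENNReal.ofReal (C * sideLen n (dIdxAt n (k - m) x) ^ w) := by
        gcongr
        exact hKbar _ x (mem_dCube_dIdxAt n _ x)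
    _ = _ := by rw [ENNReal.ofReal_mul hC]; ring

lemma ofReal_div_mul_le {p q : ℝ} (hq : 0 < q) {s t : ℝ≥0∞}
    (h : ENNReal.ofReal p * s ≤ ENNReal.ofReal q * t) : ENNReal.ofReal (p / q) * s ≤ t := by
  rw [ENNReal.ofReal_div_of_pos hq, div_eq_mul_inv, mul_right_comm, ← div_eq_mul_inv]
  exact ENNReal.div_le_of_le_mul' h

lemma two_rpow_mul_sub_add_logb {ρ : ℝ} (hρ : 0 < ρ) (a b : ℝ) (k : ℤ) (j : ℕ) :
    (2:ℝ) ^ ((j:ℝ) * (b - a + Real.logb 2 ρ)) =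
      ρ ^ j * 2 ^ (-(k:ℝ) * (a - b)) / 2 ^ (-((k - j : ℤ) : ℝ) * (a - b)) := by
  have hpow : ρ ^ j = (2:ℝ) ^ ((j:ℝ) * Real.logb 2 ρ) := by
    rw [mul_comm, Real.rpow_mul zero_le_two, Real.rpow_logb zero_lt_two (by norm_num) hρ,
      Real.rpow_natCast]
  rw [hpow, ← Real.rpow_add zero_lt_two, ← Real.rpow_sub zero_lt_two]
  push_cast
  ring_nf

theorem stmt6_general (n : ℕ) (α : ℝ)
    (σ : Measure (Euc n)) (C : ℝ) (hC : 0 < C)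
    (hKbar : ∀ Q : DIdx n, ∀ x ∈ dCube n Q,
      Kbar n σ (fun q => ENNReal.ofReal ((sideLen n q) ^ (α - (n:ℝ)))) Q x ≤
        ENNReal.ofReal (C * (sideLen n Q) ^ (α - (n:ℝ)))) :
    (n:ℝ) - α < (n:ℝ) - α + Real.logb 2 (1 / C + 1) ∧
      ∃ C'' : ℝ, 0 < C'' ∧
        ∀ (j : ℕ) (Q Q' : DIdx n), dCube n Q ⊆ dCube n Q' → Q'.1 = Q.1 - j →
          ENNReal.ofReal (C'' * 2 ^ ((j:ℝ) * ((n:ℝ) - α + Real.logb 2 (1 / C + 1)))) *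
              σ (dCube n Q) ≤ σ (dCube n Q') := by
  refine ⟨lt_add_of_pos_right _ (Real.logb_pos one_lt_two (by simp [hC])), 1 / C, by positivity, ?_⟩
  intro j Q Q' hQQ' hlev
  obtain ⟨x, hx⟩ := dCube_nonempty n Q
  rcases eq_or_ne (σ (dCube n Q')) ∞ with htop | htop
  · simp [htop]
  have hQ : Q = dIdxAt n (Q.1 - (0 : ℕ)) x := by simpa using eq_dIdxAt_of_mem hx
  have hQ' : Q' = dIdxAt n (Q.1 - j) x := by rw [eq_dIdxAt_of_mem (hQQ' hx), hlev]
  have hgrowth := pow_mul_le_mul_of_sum_range_le fun m (hm : m ≤ j) =>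
    sum_chain_le_of_Kbar_le hC.le hKbar x Q.1 <|
      ne_top_of_le_ne_top htop (measure_mono (hQ' ▸ dCube_dIdxAt_subset (by omega) x))
  rw [← ENNReal.ofReal_inv_of_pos hC, ← ENNReal.ofReal_one,
    ← ENNReal.ofReal_add zero_le_one (by positivity), ← ENNReal.ofReal_pow (by positivity),
    ← mul_assoc, ← ENNReal.ofReal_mul (by positivity), ← mul_assoc,
    ← ENNReal.ofReal_mul hC.le] at hgrowth
  rw [hQ, hQ']
  convert ofReal_div_mul_le (mul_pos hC (Real.rpow_pos_of_pos (sideLen_pos n _) _)) hgrowth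
    using 3
  simp only [sideLen_rpow, dIdxAt, Nat.cast_zero, sub_zero,
    two_rpow_mul_sub_add_logb (by positivity : 0 < 1 / C + 1) α n Q.1 j]
  field_simp
  ring

/-- Let `0 < α < n`, `K(Q) = r_Q^{α-n}`, and suppose there is `C > 0` with
`K̄(Q)(x) ≤ C r_Q^{α-n}` for every dyadic `Q` and `x ∈ Q`. Then `σ` satisfies the dyadic
reverse doubling condition `DRD_γ` with `γ = n - α + log₂(1/C + 1) > n - α`: there is
`C'' > 0` such that `σ(2^j Q) ≥ C'' 2^{jγ} σ(Q)` for all `j ≥ 0` and `Q ∈ 𝒟`, where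
`2^j Q` is the (unique) dyadic cube containing `Q` with side length `2^j r_Q`. -/
theorem stmt6 (n : ℕ) (hn : 0 < n) (α : ℝ) (hα0 : 0 < α) (hαn : α < n)
    (σ : Measure (Euc n)) [IsLocallyFiniteMeasure σ] (C : ℝ) (hC : 0 < C)
    (hKbar : ∀ Q : DIdx n, ∀ x ∈ dCube n Q,
      Kbar n σ (fun q => ENNReal.ofReal ((sideLen n q) ^ (α - (n:ℝ)))) Q x ≤
        ENNReal.ofReal (C * (sideLen n Q) ^ (α - (n:ℝ)))) :
    (n:ℝ) - α < (n:ℝ) - α + Real.logb 2 (1 / C + 1) ∧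
      ∃ C'' : ℝ, 0 < C'' ∧
        ∀ (j : ℕ) (Q Q' : DIdx n), dCube n Q ⊆ dCube n Q' → Q'.1 = Q.1 - j →
          ENNReal.ofReal (C'' * 2 ^ ((j:ℝ) * ((n:ℝ) - α + Real.logb 2 (1 / C + 1)))) *
              σ (dCube n Q) ≤ σ (dCube n Q') :=
  stmt6_general n α σ C hC hKbar
end
end
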